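/- Let p be a prime, n a positive integer, and C_1, C_2 codes of length n over Z_p with C_1 ⊆ C_2 ⊆ C_1^⊥, dim C_1 = k_1, dim C_2 = k_1 + k_2; when p = 2 assume C_1 is doubly even. Let C' be a self-orthogonal code of length n over Z_{p^2} with π(C') = C_1 and ι^{-1}(C') = C_2. Then the number of self-orthogonal codes C over Z_{p^2} with C ⊆ C' and π(C) = ι^{-1}(C) = C_1 is exactly p^{k_1 k_2}. -/
import Mathlib

open scoped BigOperators

set_option maxHeartbeats 1000000

namespace Paper

/-- Self-orthogonality of a set of vectors w.r.t. the standard inner product. -/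
def sorth {m : ℕ} {ι : Type} [Fintype ι] (S : Set (ι → ZMod m)) : Prop :=
  ∀ x ∈ S, ∀ y ∈ S, ∑ i, x i * y i = 0

/-- The dual (as a set) of a set of vectors w.r.t. the standard inner product. -/
def dualSet {m : ℕ} {ι : Type} [Fintype ι] (S : Set (ι → ZMod m)) : Set (ι → ZMod m) :=
  {x | ∀ y ∈ S, ∑ i, x i * y i = 0}

/-- A set of vectors is doubly even if every element has Hamming weight divisible by 4. -/
def doublyEven {m : ℕ} {ι : Type} [Fintype ι] (S : Set (ι → ZMod m)) : Prop :=
  ∀ x ∈ S, 4 ∣ (Finset.univ.filter fun i => x i ≠ 0).card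

/-- Coordinatewise reduction map `(Z_{p^2})^ι → (Z_p)^ι`. -/
def res (p : ℕ) [Fact p.Prime] {ι : Type} (v : ι → ZMod (p ^ 2)) : ι → ZMod p :=
  fun i => ZMod.castHom (dvd_pow_self p (by norm_num)) (ZMod p) (v i)

/-- The injection `(Z_p)^ι → (Z_{p^2})^ι` induced by `Z_p ≅ pZ_{p^2} ⊆ Z_{p^2}`. -/
def iot (p : ℕ) {ι : Type} (v : ι → ZMod p) : ι → ZMod (p ^ 2) :=
  fun i => (p : ZMod (p ^ 2)) * (ZMod.cast (v i))

/-- Coordinatewise reduction map `(Z_4)^ι → (Z_2)^ι`. -/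
def res4 {ι : Type} (v : ι → ZMod 4) : ι → ZMod 2 :=
  fun i => ZMod.castHom (by norm_num : (2:ℕ) ∣ 4) (ZMod 2) (v i)

/-- The injection `(Z_2)^ι → (Z_4)^ι`. -/
def iot4 {ι : Type} (v : ι → ZMod 2) : ι → ZMod 4 :=
  fun i => (2 : ZMod 4) * (ZMod.cast (v i))

/-- Euclidean weight on `Z_4`. -/
def ewt (x : ZMod 4) : ℕ := if x = 0 then 0 else if x = 2 then 4 else 1

/-- A quaternary code is even if every codeword has Euclidean weight divisible by 8. -/
def evenCode {ι : Type} [Fintype ι] (S : Set (ι → ZMod 4)) : Prop :=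
  ∀ x ∈ S, 8 ∣ ∑ i, ewt (x i)

/-- The code over `Z_q` generated by the rows of an integer matrix. -/
def intRowSpan (q : ℕ) {κ ι : Type} (G : Matrix κ ι ℤ) :
    Submodule (ZMod q) (ι → ZMod q) :=
  Submodule.span (ZMod q) (Set.range fun i => fun c => ((G i c : ℤ) : ZMod q))

/-- The Gaussian binomial coefficient `[n choose k]_p`. -/
def gauss (p n k : ℕ) : ℚ :=
  ∏ i ∈ Finset.range k, ((p : ℚ) ^ n - (p : ℚ) ^ i) / ((p : ℚ) ^ k - (p : ℚ) ^ i)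

/-! ### Auxiliary lemmas for `stmt7`. -/

section Aux

set_option linter.unusedSectionVars false

variable (p : ℕ) [Fact p.Prime]

/-- The reduction ring hom. -/
abbrev rho : ZMod (p ^ 2) →+* ZMod p := ZMod.castHom (dvd_pow_self p two_ne_zero) (ZMod p)

lemma rho_cast (x : ZMod p) : rho p (ZMod.cast x) = x := ZMod.ringHom_map_cast _ x

lemma pp_zero : ((p : ZMod (p ^ 2)) * p) = 0 := by
  have h : ((p ^ 2 : ℕ) : ZMod (p ^ 2)) = 0 := ZMod.natCast_self _
  push_cast at h
  linear_combination h

lemma ker_rho {y : ZMod (p ^ 2)} (h : rho p y = 0) :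
    ∃ t : ZMod (p ^ 2), y = (p : ZMod (p ^ 2)) * t := by
  have hp2 : (p ^ 2 : ℕ) ≠ 0 := pow_ne_zero 2 (Fact.out (p := p.Prime)).ne_zero
  haveI : NeZero (p ^ 2) := ⟨hp2⟩
  have hv : ((y.val : ℕ) : ZMod p) = 0 := by
    rw [ZMod.natCast_val, ← ZMod.castHom_apply (h := dvd_pow_self p two_ne_zero), h]
  rw [ZMod.natCast_eq_zero_iff] at hv
  obtain ⟨s, hs⟩ := hv
  refine ⟨(s : ZMod (p ^ 2)), ?_⟩
  have : ((y.val : ℕ) : ZMod (p ^ 2)) = y := ZMod.natCast_zmod_val y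
  rw [← this, hs]
  push_cast
  ring

lemma pmul_congr {y z : ZMod (p ^ 2)} (h : rho p y = rho p z) :
    (p : ZMod (p ^ 2)) * y = (p : ZMod (p ^ 2)) * z := by
  obtain ⟨t, ht⟩ := ker_rho p (y := y - z) (by rw [map_sub, h, sub_self])
  have hy : y = z + p * t := by linear_combination ht
  rw [hy, mul_add, ← mul_assoc, pp_zero, zero_mul, add_zero]

lemma pmul_cast_eq (y : ZMod (p ^ 2)) :
    (p : ZMod (p ^ 2)) * ZMod.cast (rho p y) = (p : ZMod (p ^ 2)) * y :=
  pmul_congr p (rho_cast p _)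

lemma pmul_cast_zero {x : ZMod p} (h : (p : ZMod (p ^ 2)) * ZMod.cast x = 0) : x = 0 := by
  have hp : 0 < p := (Fact.out (p := p.Prime)).pos
  haveI : NeZero p := ⟨hp.ne'⟩
  have hc : (ZMod.cast x : ZMod (p ^ 2)) = ((x.val : ℕ) : ZMod (p ^ 2)) := (ZMod.natCast_val x).symm
  rw [hc, ← Nat.cast_mul, ZMod.natCast_eq_zero_iff, pow_two] at h
  have hdvd : p ∣ x.val := (mul_dvd_mul_iff_left hp.ne').mp (by exact_mod_cast h)
  have hlt : x.val < p := ZMod.val_lt x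
  have hv0 : x.val = 0 := Nat.eq_zero_of_dvd_of_lt hdvd hlt
  exact (ZMod.val_eq_zero x).mp hv0

variable {ι : Type} [Fintype ι]

lemma res_apply (v : ι → ZMod (p ^ 2)) (i : ι) : res p v i = rho p (v i) := rfl

/-- `res` as a semilinear map. -/
def resL : (ι → ZMod (p ^ 2)) →ₛₗ[rho p] (ι → ZMod p) where
  toFun := res p
  map_add' u v := by funext i; simp [res_apply, map_add]
  map_smul' a v := by funext i; simp [res_apply, map_mul]

instance : RingHomSurjective (rho p) :=
  ⟨fun x => ⟨ZMod.cast x, rho_cast p x⟩⟩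

/-- `iot` as an additive hom. -/
def iotHom : (ι → ZMod p) →+ (ι → ZMod (p ^ 2)) where
  toFun := iot p
  map_zero' := by funext i; simp [iot]
  map_add' u v := by
    funext i
    show (p : ZMod (p ^ 2)) * ZMod.cast (u i + v i)
      = (p : ZMod (p ^ 2)) * ZMod.cast (u i) + (p : ZMod (p ^ 2)) * ZMod.cast (v i)
    rw [← mul_add]
    exact pmul_congr p (by simp [rho_cast, map_add])

lemma iot_add (u v : ι → ZMod p) : iot p (u + v) = iot p u + iot p v :=
  (iotHom p).map_add u v

lemma iot_sub (u v : ι → ZMod p) : iot p (u - v) = iot p u - iot p v :=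
  (iotHom p).map_sub u v

lemma iot_sum {κ : Type} (s : Finset κ) (f : κ → ι → ZMod p) :
    iot p (∑ j ∈ s, f j) = ∑ j ∈ s, iot p (f j) :=
  map_sum (iotHom p) f s

lemma iot_smul (a : ZMod p) (v : ι → ZMod p) :
    iot p (a • v) = (ZMod.cast a : ZMod (p ^ 2)) • iot p v := by
  funext i
  show (p : ZMod (p ^ 2)) * ZMod.cast (a * v i)
    = (ZMod.cast a : ZMod (p ^ 2)) * ((p : ZMod (p ^ 2)) * ZMod.cast (v i))
  rw [mul_left_comm]
  exact pmul_congr p (by simp [rho_cast, map_mul])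

lemma smul_iot (t : ZMod (p ^ 2)) (v : ι → ZMod p) :
    t • iot p v = iot p (rho p t • v) := by
  funext i
  show t * ((p : ZMod (p ^ 2)) * ZMod.cast (v i)) = (p : ZMod (p ^ 2)) * ZMod.cast (rho p t * v i)
  rw [mul_left_comm]
  exact (pmul_congr p (by simp [rho_cast, map_mul])).symm

lemma res_iot (v : ι → ZMod p) : res p (iot p v) = 0 := by
  funext i
  show rho p ((p : ZMod (p ^ 2)) * ZMod.cast (v i)) = 0
  rw [map_mul]
  simp

lemma p_smul_eq (y : ι → ZMod (p ^ 2)) : (p : ZMod (p ^ 2)) • y = iot p (res p y) := by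
  funext i
  exact (pmul_cast_eq p (y i)).symm

lemma iot_inj : Function.Injective (iot p (ι := ι)) := by
  intro u v h
  funext i
  have h2 : iot p (u - v) = 0 := by rw [iot_sub, h, sub_self]
  have h3 : (p : ZMod (p ^ 2)) * ZMod.cast (u i - v i) = 0 := congrFun h2 i
  exact sub_eq_zero.mp (pmul_cast_zero p h3)

lemma res_eq_zero_iff {z : ι → ZMod (p ^ 2)} (h : res p z = 0) : ∃ v, z = iot p v := by
  classical
  choose t ht using fun i => ker_rho p (y := z i) (congrFun h i)
  refine ⟨res p t, ?_⟩
  funext i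
  show z i = (p : ZMod (p ^ 2)) * ZMod.cast (rho p (t i))
  rw [pmul_cast_eq, ← ht i]

lemma res_add (u v : ι → ZMod (p ^ 2)) : res p (u + v) = res p u + res p v :=
  (resL p).map_add u v

lemma res_sub (u v : ι → ZMod (p ^ 2)) : res p (u - v) = res p u - res p v :=
  (resL p).map_sub u v

lemma res_sum_smul {κ : Type} [Fintype κ] (a : κ → ZMod (p ^ 2)) (g : κ → ι → ZMod (p ^ 2)) :
    res p (∑ m, a m • g m) = ∑ m, rho p (a m) • res p (g m) := by
  show resL p (∑ m, a m • g m) = _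
  rw [map_sum]
  exact Finset.sum_congr rfl fun m _ => (resL p).map_smulₛₗ (a m) (g m)

end Aux

open Submodule Module in
lemma exists_cd {K : Type} [Field K] {V : Type} [AddCommGroup V] [Module K V]
    [FiniteDimensional K V] {k1 k2 : ℕ} (C1 C2 : Submodule K V) (h12 : C1 ≤ C2)
    (hd1 : finrank K C1 = k1) (hd2 : finrank K C2 = k1 + k2) :
    ∃ (c : Fin k1 → V) (d : Fin k2 → V),
      (∀ i, c i ∈ C1) ∧ (∀ j, d j ∈ C2) ∧
      Submodule.span K (Set.range c) = C1 ∧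
      (∀ a : Fin k1 → K, ∑ i, a i • c i = 0 → ∀ i, a i = 0) ∧
      (∀ v ∈ C2, ∃ (α : Fin k1 → K) (β : Fin k2 → K),
        v = ∑ i, α i • c i + ∑ j, β j • d j) ∧
      (∀ e : Fin k2 → K, (∑ j, e j • d j) ∈ C1 → ∀ j, e j = 0) := by
  classical
  set C1' : Submodule K C2 := Submodule.comap C2.subtype C1 with hC1'
  obtain ⟨W, hW⟩ := Submodule.exists_isCompl C1'
  set W' : Submodule K V := Submodule.map C2.subtype W with hW'
  have hmapC1' : Submodule.map C2.subtype C1' = C1 := by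
    rw [hC1', Submodule.map_comap_subtype, inf_eq_right.mpr h12]
  have hsup : C1 ⊔ W' = C2 := by
    rw [← hmapC1', hW', ← Submodule.map_sup, hW.codisjoint.eq_top, Submodule.map_top,
      Submodule.range_subtype]
  have hinf : C1 ⊓ W' = ⊥ := by
    rw [← hmapC1', hW', ← Submodule.map_inf _ (Submodule.injective_subtype C2),
      hW.disjoint.eq_bot, Submodule.map_bot]
  have hrk : finrank K W' = k2 := by
    have h := Submodule.finrank_sup_add_finrank_inf_eq C1 W'
    rw [hsup, hinf, hd2, hd1, finrank_bot] at h
    omega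
  let bc : Basis (Fin k1) K C1 := Module.finBasisOfFinrankEq K C1 hd1
  let bd : Basis (Fin k2) K W' := Module.finBasisOfFinrankEq K W' hrk
  have hspanc : Submodule.span K (Set.range (fun i => (bc i : V))) = C1 := by
    have : Set.range (fun i => (bc i : V)) = C1.subtype '' Set.range bc := by
      rw [← Set.range_comp]; rfl
    rw [this, ← Submodule.map_span, bc.span_eq, Submodule.map_top, Submodule.range_subtype]
  have hspand : Submodule.span K (Set.range (fun j => (bd j : V))) = W' := by
    have : Set.range (fun j => (bd j : V)) = W'.subtype '' Set.range bd := by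
      rw [← Set.range_comp]; rfl
    rw [this, ← Submodule.map_span, bd.span_eq, Submodule.map_top, Submodule.range_subtype]
  refine ⟨fun i => (bc i : V), fun j => (bd j : V), fun i => (bc i).2, fun j => hsup ▸
    Submodule.mem_sup_right (bd j).2, hspanc, ?_, ?_, ?_⟩
  · intro a ha i
    have h0 : ∑ i, a i • bc i = 0 := by
      apply Subtype.ext
      push_cast
      simpa using ha
    exact Fintype.linearIndependent_iff.mp bc.linearIndependent a h0 i
  · intro v hv
    rw [← hsup] at hv
    obtain ⟨u, hu, w, hw, huw⟩ := Submodule.mem_sup.mp hv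
    rw [← hspanc] at hu
    rw [← hspand] at hw
    obtain ⟨α, hα⟩ := Submodule.mem_span_range_iff_exists_fun K |>.mp hu
    obtain ⟨β, hβ⟩ := Submodule.mem_span_range_iff_exists_fun K |>.mp hw
    exact ⟨α, β, by rw [hα, hβ, huw]⟩
  · intro e he j
    have hmem0 : (∑ j, e j • (bd j : V)) ∈ Submodule.span K (Set.range (fun j => (bd j : V))) :=
      Submodule.sum_mem _ fun j _ => Submodule.smul_mem _ _ (Submodule.subset_span ⟨j, rfl⟩)
    have hmem : (∑ j, e j • (bd j : V)) ∈ W' := hspand.le hmem0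
    have h0 : (∑ j, e j • (bd j : V)) = 0 := by
      have : (∑ j, e j • (bd j : V)) ∈ C1 ⊓ W' := ⟨he, hmem⟩
      rw [hinf] at this
      simpa using this
    have h0' : ∑ j, e j • bd j = 0 := by
      apply Subtype.ext
      push_cast
      simpa using h0
    exact Fintype.linearIndependent_iff.mp bd.linearIndependent e h0' j

/-- if `C₁ ⊆ C₂ ⊆ C₁^⊥`, `dim C₁ = k₁`, `dim C₂ = k₁ + k₂` (with `C₁` doubly even
when `p = 2`) and `C'` is a self-orthogonal code over `Z_{p^2}` with `π(C') = C₁`,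
`ι⁻¹(C') = C₂`, then the number of self-orthogonal codes `C ⊆ C'` with
`π(C) = ι⁻¹(C) = C₁` is `p^{k₁k₂}`. -/
theorem stmt7 (p n k1 k2 : ℕ) [Fact p.Prime] (hn : 0 < n)
    (C1 C2 : Submodule (ZMod p) (Fin n → ZMod p))
    (h12 : C1 ≤ C2)
    (h2d : (C2 : Set (Fin n → ZMod p)) ⊆ dualSet (C1 : Set (Fin n → ZMod p)))
    (hdim1 : Module.finrank (ZMod p) C1 = k1)
    (hdim2 : Module.finrank (ZMod p) C2 = k1 + k2)
    (hde : p = 2 → doublyEven (C1 : Set (Fin n → ZMod p)))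
    (C' : Submodule (ZMod (p ^ 2)) (Fin n → ZMod (p ^ 2)))
    (hso' : sorth (C' : Set (Fin n → ZMod (p ^ 2))))
    (hres' : res p '' (C' : Set (Fin n → ZMod (p ^ 2))) = (C1 : Set (Fin n → ZMod p)))
    (htor' : iot p ⁻¹' (C' : Set (Fin n → ZMod (p ^ 2))) = (C2 : Set (Fin n → ZMod p))) :
    {C : Submodule (ZMod (p ^ 2)) (Fin n → ZMod (p ^ 2)) |
        sorth (C : Set (Fin n → ZMod (p ^ 2))) ∧ C ≤ C' ∧
        res p '' (C : Set (Fin n → ZMod (p ^ 2))) = (C1 : Set (Fin n → ZMod p)) ∧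
        iot p ⁻¹' (C : Set (Fin n → ZMod (p ^ 2))) = (C1 : Set (Fin n → ZMod p))}.ncard
      = p ^ (k1 * k2) := by
  classical
  obtain ⟨c, d, hc1, hd2c, hspanc, hcind, hrep, hdind⟩ := exists_cd C1 C2 h12 hdim1 hdim2
  -- lifts of the basis of C1 into C'
  have hx : ∀ i : Fin k1, ∃ xx : Fin n → ZMod (p ^ 2), xx ∈ C' ∧ res p xx = c i := by
    intro i
    have hmem : c i ∈ res p '' (C' : Set (Fin n → ZMod (p ^ 2))) := by
      rw [hres']; exact hc1 i
    obtain ⟨xx, hxx, hxe⟩ := hmem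
    exact ⟨xx, hxx, hxe⟩
  choose x hxC' hxres using hx
  have hiotC2 : ∀ v ∈ C2, iot p v ∈ C' := by
    intro v hv
    have h : v ∈ iot p ⁻¹' (C' : Set (Fin n → ZMod (p ^ 2))) := by rw [htor']; exact hv
    exact h
  have hC2iot : ∀ v : Fin n → ZMod p, iot p v ∈ C' → v ∈ C2 := by
    intro v hv
    have h : v ∈ iot p ⁻¹' (C' : Set (Fin n → ZMod (p ^ 2))) := hv
    rwa [htor'] at h
  set gen : (Fin k1 → Fin k2 → ZMod p) → Fin k1 → (Fin n → ZMod (p ^ 2)) :=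
    fun A i => x i + iot p (∑ j, A i j • d j) with hgen
  set Fm : (Fin k1 → Fin k2 → ZMod p) → Submodule (ZMod (p ^ 2)) (Fin n → ZMod (p ^ 2)) :=
    fun A => Submodule.span (ZMod (p ^ 2)) (Set.range (gen A)) with hFm
  have hgen_mem : ∀ A i, gen A i ∈ Fm A := fun A i => Submodule.subset_span ⟨i, rfl⟩
  have hresgen : ∀ A i, res p (gen A i) = c i := by
    intro A i
    show res p (x i + iot p (∑ j, A i j • d j)) = c i
    rw [res_add, res_iot, add_zero, hxres]
  have hgenC' : ∀ A i, gen A i ∈ C' := fun A i =>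
    C'.add_mem (hxC' i)
      (hiotC2 _ (Submodule.sum_mem _ fun j _ => C2.smul_mem _ (hd2c j)))
  have hFmC' : ∀ A, Fm A ≤ C' := fun A =>
    Submodule.span_le.mpr (by rintro _ ⟨i, rfl⟩; exact hgenC' A i)
  have hpsg : ∀ A i, (p : ZMod (p ^ 2)) • gen A i = iot p (c i) := by
    intro A i
    rw [p_smul_eq, hresgen]
  have hiotC1mem : ∀ A, ∀ v ∈ C1, iot p v ∈ Fm A := by
    intro A v hv
    rw [← hspanc] at hv
    obtain ⟨γ, hγ⟩ := Submodule.mem_span_range_iff_exists_fun (ZMod p) |>.mp hv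
    have hkey : iot p v = ∑ i, (ZMod.cast (γ i) : ZMod (p ^ 2)) • ((p : ZMod (p ^ 2)) • gen A i) := by
      rw [← hγ, iot_sum]
      exact Finset.sum_congr rfl fun i _ => by rw [iot_smul, hpsg]
    rw [hkey]
    exact Submodule.sum_mem _ fun i _ =>
      Submodule.smul_mem _ _ (Submodule.smul_mem _ _ (hgen_mem A i))
  have hmem_iot : ∀ A, ∀ v : Fin n → ZMod p, iot p v ∈ Fm A → v ∈ C1 := by
    intro A v hv
    obtain ⟨a, ha⟩ := Submodule.mem_span_range_iff_exists_fun (ZMod (p ^ 2)) |>.mp hv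
    have hres0 : ∑ m, rho p (a m) • c m = 0 := by
      have h1 : res p (∑ m, a m • gen A m) = res p (iot p v) := by rw [ha]
      rw [res_sum_smul, res_iot] at h1
      simpa [hresgen] using h1
    have hz : ∀ m, rho p (a m) = 0 := hcind _ hres0
    choose t ht using fun m => ker_rho p (hz m)
    have hval : iot p v = iot p (∑ m, rho p (t m) • c m) := by
      calc iot p v = ∑ m, a m • gen A m := ha.symm
        _ = ∑ m, t m • ((p : ZMod (p ^ 2)) • gen A m) := by
            refine Finset.sum_congr rfl fun m _ => ?_
            rw [ht m, mul_comm, mul_smul]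
        _ = ∑ m, t m • iot p (c m) := by
            exact Finset.sum_congr rfl fun m _ => by rw [hpsg]
        _ = ∑ m, iot p (rho p (t m) • c m) := by
            exact Finset.sum_congr rfl fun m _ => smul_iot p (t m) (c m)
        _ = iot p (∑ m, rho p (t m) • c m) := (iot_sum p Finset.univ _).symm
    have hveq : v = ∑ m, rho p (t m) • c m := iot_inj p hval
    rw [hveq]
    exact Submodule.sum_mem _ fun m _ => Submodule.smul_mem _ _ (hc1 m)
  have hres_Fm : ∀ A, res p '' (Fm A : Set (Fin n → ZMod (p ^ 2))) = (C1 : Set (Fin n → ZMod p)) := by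
    intro A
    have h1 : Submodule.map (resL p) (Fm A) = C1 := by
      show Submodule.map (resL p) (Submodule.span (ZMod (p ^ 2)) (Set.range (gen A))) = C1
      rw [Submodule.map_span, ← Set.range_comp]
      have h2 : (⇑(resL p) ∘ gen A) = c := funext fun i => hresgen A i
      rw [h2, hspanc]
    have h2 : res p '' (Fm A : Set (Fin n → ZMod (p ^ 2)))
        = ⇑(resL p) '' (Fm A : Set (Fin n → ZMod (p ^ 2))) := rfl
    rw [h2, ← Submodule.map_coe, h1]
  have htor_Fm : ∀ A, iot p ⁻¹' (Fm A : Set (Fin n → ZMod (p ^ 2))) = (C1 : Set (Fin n → ZMod p)) := by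
    intro A
    ext v
    exact ⟨fun hv => hmem_iot A v hv, fun hv => hiotC1mem A v hv⟩
  have hFmS : ∀ A, sorth (Fm A : Set (Fin n → ZMod (p ^ 2))) := by
    intro A u hu w hw
    exact hso' u (hFmC' A hu) w (hFmC' A hw)
  have hinj : Function.Injective Fm := by
    intro A A' hAA
    funext i
    have hgenmem : gen A i ∈ Fm A' := hAA ▸ hgen_mem A i
    have hdiff : iot p (∑ j, (A i j - A' i j) • d j) = gen A i - gen A' i := by
      have hsum : (∑ j, (A i j - A' i j) • d j)
          = (∑ j, A i j • d j) - ∑ j, A' i j • d j := by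
        rw [← Finset.sum_sub_distrib]
        exact Finset.sum_congr rfl fun j _ => sub_smul _ _ _
      show iot p _ = (x i + iot p (∑ j, A i j • d j)) - (x i + iot p (∑ j, A' i j • d j))
      rw [hsum, iot_sub, add_sub_add_left_eq_sub]
    have hmem : iot p (∑ j, (A i j - A' i j) • d j) ∈ Fm A' := by
      rw [hdiff]
      exact Submodule.sub_mem _ hgenmem (hgen_mem A' i)
    have hC1m := hmem_iot A' _ hmem
    have hz := hdind _ hC1m
    funext j
    exact sub_eq_zero.mp (hz j)
  have hsurj : ∀ C : Submodule (ZMod (p ^ 2)) (Fin n → ZMod (p ^ 2)),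
      sorth (C : Set (Fin n → ZMod (p ^ 2))) → C ≤ C' →
      res p '' (C : Set (Fin n → ZMod (p ^ 2))) = (C1 : Set (Fin n → ZMod p)) →
      iot p ⁻¹' (C : Set (Fin n → ZMod (p ^ 2))) = (C1 : Set (Fin n → ZMod p)) →
      ∃ A, Fm A = C := by
    intro C hCso hCle hCres hCtor
    have hy : ∀ i : Fin k1, ∃ yy, yy ∈ C ∧ res p yy = c i := by
      intro i
      have hmem : c i ∈ res p '' (C : Set (Fin n → ZMod (p ^ 2))) := by
        rw [hCres]; exact hc1 i
      obtain ⟨yy, h1, h2⟩ := hmem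
      exact ⟨yy, h1, h2⟩
    choose y hyC hyres using hy
    have hiotC1C : ∀ u ∈ C1, iot p u ∈ C := by
      intro u hu
      have hmem : u ∈ res p '' (C : Set (Fin n → ZMod (p ^ 2))) := by rw [hCres]; exact hu
      obtain ⟨z, hz, hzr⟩ := hmem
      have hkey : iot p u = (p : ZMod (p ^ 2)) • z := by rw [← hzr, ← p_smul_eq]
      rw [hkey]
      exact C.smul_mem _ hz
    have hzres : ∀ i, res p (y i - x i) = 0 := fun i => by
      rw [res_sub, hyres, hxres, sub_self]
    have hv : ∀ i, ∃ v, y i - x i = iot p v := fun i => res_eq_zero_iff p (hzres i)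
    choose v hviot using hv
    have hvC2 : ∀ i, v i ∈ C2 := fun i => hC2iot _ (by
      rw [← hviot]
      exact Submodule.sub_mem _ (hCle (hyC i)) (hxC' i))
    have hsplit : ∀ i, ∃ α : Fin k1 → ZMod p, ∃ β : Fin k2 → ZMod p,
        v i = ∑ m, α m • c m + ∑ j, β j • d j := fun i => hrep (v i) (hvC2 i)
    choose α A hαA using hsplit
    refine ⟨A, ?_⟩
    have hgenC : ∀ i, gen A i ∈ C := by
      intro i
      have hkey : gen A i = y i - iot p (∑ m, α i m • c m) := by
        show x i + iot p (∑ j, A i j • d j) = y i - iot p (∑ m, α i m • c m)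
        have hyi : y i = x i + iot p (v i) := by rw [← hviot i]; abel
        rw [hyi, hαA i, iot_add]
        abel
      rw [hkey]
      exact Submodule.sub_mem _ (hyC i)
        (hiotC1C _ (Submodule.sum_mem _ fun m _ => Submodule.smul_mem _ _ (hc1 m)))
    apply le_antisymm
    · exact Submodule.span_le.mpr (by rintro _ ⟨i, rfl⟩; exact hgenC i)
    · intro z hz
      have hrz : res p z ∈ C1 := by
        have : res p z ∈ res p '' (C : Set (Fin n → ZMod (p ^ 2))) := ⟨z, hz, rfl⟩
        rwa [hCres] at this
      rw [← hspanc] at hrz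
      obtain ⟨γ, hγ⟩ := Submodule.mem_span_range_iff_exists_fun (ZMod p) |>.mp hrz
      set z' := z - ∑ m, (ZMod.cast (γ m) : ZMod (p ^ 2)) • gen A m with hz'
      have hz'C : z' ∈ C := Submodule.sub_mem _ hz
        (Submodule.sum_mem _ fun m _ => Submodule.smul_mem _ _ (hgenC m))
      have hz'res : res p z' = 0 := by
        rw [hz', res_sub, res_sum_smul]
        have hterm : ∀ m ∈ Finset.univ, rho p (ZMod.cast (γ m) : ZMod (p ^ 2)) • res p (gen A m)
            = γ m • c m := fun m _ => by rw [rho_cast, hresgen]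
        rw [Finset.sum_congr rfl hterm, hγ, sub_self]
      obtain ⟨w, hw⟩ := res_eq_zero_iff p hz'res
      have hwC1 : w ∈ C1 := by
        have hmem : w ∈ iot p ⁻¹' (C : Set (Fin n → ZMod (p ^ 2))) := by
          show iot p w ∈ (C : Set (Fin n → ZMod (p ^ 2)))
          rw [← hw]; exact hz'C
        rwa [hCtor] at hmem
      have hz'mem : z' ∈ Fm A := by
        rw [hw]; exact hiotC1mem A w hwC1
      have hzeq : z = z' + ∑ m, (ZMod.cast (γ m) : ZMod (p ^ 2)) • gen A m := by
        rw [hz']; abel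
      rw [hzeq]
      exact Submodule.add_mem _ hz'mem
        (Submodule.sum_mem _ fun m _ => Submodule.smul_mem _ _ (hgen_mem A m))
  have hSeq : {C : Submodule (ZMod (p ^ 2)) (Fin n → ZMod (p ^ 2)) |
        sorth (C : Set (Fin n → ZMod (p ^ 2))) ∧ C ≤ C' ∧
        res p '' (C : Set (Fin n → ZMod (p ^ 2))) = (C1 : Set (Fin n → ZMod p)) ∧
        iot p ⁻¹' (C : Set (Fin n → ZMod (p ^ 2))) = (C1 : Set (Fin n → ZMod p))}
      = Set.range Fm := by
    ext C
    constructor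
    · rintro ⟨h1, h2, h3, h4⟩
      obtain ⟨A, hA⟩ := hsurj C h1 h2 h3 h4
      exact ⟨A, hA⟩
    · rintro ⟨A, rfl⟩
      exact ⟨hFmS A, hFmC' A, hres_Fm A, htor_Fm A⟩
  rw [hSeq, ← Nat.card_coe_set_eq, Nat.card_range_of_injective hinj]
  haveI : NeZero p := ⟨(Fact.out (p := p.Prime)).ne_zero⟩
  have hcard : Nat.card (ZMod p) = p := by simp [Nat.card_eq_fintype_card]
  rw [Nat.card_fun, Nat.card_fun, hcard, Nat.card_eq_fintype_card, Nat.card_eq_fintype_card,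
    Fintype.card_fin, Fintype.card_fin, ← pow_mul, mul_comm k2 k1]

end Paper
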